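/- arXiv:2510.03801 — 2 statements merged into one kernel-verified Lean document; each statement's English description precedes it below -/
import Mathlib

section
/- If M_φ has finite index m in F, then the sequence H₀ = H, H_{k+1} = (⋂_c c⁻¹ H_k c) ∩ φ(H_k) ∩ φ⁻¹(H_k) stabilizes after at most ⌈log₂ m⌉ steps, i.e., H_{⌈log₂ m⌉} = M_φ. Conversely, if the sequence stabilizes then M_φ has finite index. -/
/-- Image under `φ : H → H` (viewed in `F`) of a subgroup `K ≤ F`;
for `K ≤ H` this is `φ(K)`. -/
def phiImg {F : Type*} [Group F] {H : Subgroup F} (φ : H →* H) (K : Subgroup F) :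
    Subgroup F :=
  Subgroup.map H.subtype (Subgroup.map φ (K.subgroupOf H))

/-- The sequence `H₀ = H`, `H_{k+1} = (⋂_c c⁻¹ H_k c) ∩ φ(H_k) ∩ φ⁻¹(H_k)`. -/
def hnSeq {F : Type*} [Group F] (H : Subgroup F) (φ : H ≃* H) : ℕ → Subgroup F
  | 0 => H
  | k + 1 =>
      (⨅ c : F, Subgroup.map (MulAut.conj c⁻¹).toMonoidHom (hnSeq H φ k)) ⊓
        phiImg φ.toMonoidHom (hnSeq H φ k) ⊓
        phiImg φ.symm.toMonoidHom (hnSeq H φ k)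

section Aux

variable {F : Type*} [Group F] {H : Subgroup F}

lemma mem_phiImg_iff {ψ : H →* H} {K : Subgroup F} {x : F} :
    x ∈ phiImg ψ K ↔ ∃ y : H, (y : F) ∈ K ∧ ((ψ y : H) : F) = x := by
  constructor
  · rintro ⟨b, ⟨y, hy, rfl⟩, rfl⟩
    exact ⟨y, hy, rfl⟩
  · rintro ⟨y, hy, rfl⟩
    exact ⟨ψ y, ⟨y, hy, rfl⟩, rfl⟩

lemma phiImg_le_H {ψ : H →* H} {K : Subgroup F} : phiImg ψ K ≤ H :=
  Subgroup.map_subtype_le _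

variable (φ : H ≃* H)

lemma hnSeq_le_H : ∀ k, hnSeq H φ k ≤ H
  | 0 => le_rfl
  | _ + 1 => le_trans (le_trans inf_le_left inf_le_right) phiImg_le_H

lemma hnSeq_succ_le (k : ℕ) : hnSeq H φ (k + 1) ≤ hnSeq H φ k := by
  refine le_trans (le_trans inf_le_left inf_le_left) (le_trans (iInf_le _ (1 : F)) ?_)
  intro x hx
  rcases hx with ⟨y, hy, rfl⟩
  simpa using hy

lemma phiImg_index_ne_zero [H.FiniteIndex] {K : Subgroup F} (hK : K ≤ H)
    (hKi : K.index ≠ 0) (ψ : H ≃* H) : (phiImg ψ.toMonoidHom K).index ≠ 0 := by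
  rw [phiImg, Subgroup.index_map_subtype,
    Subgroup.index_map_eq _ ψ.surjective
      (le_of_eq_of_le (ψ.toMonoidHom.ker_eq_bot_iff.mpr ψ.injective) bot_le)]
  refine Nat.mul_ne_zero ?_ Subgroup.FiniteIndex.index_ne_zero
  have h := Subgroup.relIndex_mul_index hK
  intro h0
  rw [Subgroup.relIndex] at h
  rw [h0, zero_mul] at h
  exact hKi h.symm

lemma hnSeq_index_ne_zero [H.FiniteIndex] (k : ℕ) : (hnSeq H φ k).index ≠ 0 := by
  induction k with
  | zero => exact fun h => Subgroup.FiniteIndex.index_ne_zero (H := H) h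
  | succ k ih =>
    have hle := hnSeq_le_H φ k
    show ((⨅ c : F, Subgroup.map (MulAut.conj c⁻¹).toMonoidHom (hnSeq H φ k)) ⊓
        phiImg φ.toMonoidHom (hnSeq H φ k) ⊓
        phiImg φ.symm.toMonoidHom (hnSeq H φ k)).index ≠ 0
    have h1 : (⨅ c : F, Subgroup.map (MulAut.conj c⁻¹).toMonoidHom (hnSeq H φ k)).index ≠ 0 := by
      have hcore : (hnSeq H φ k).normalCore ≤
          ⨅ c : F, Subgroup.map (MulAut.conj c⁻¹).toMonoidHom (hnSeq H φ k) := by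
        refine le_iInf fun c => ?_
        intro x hx
        refine ⟨c * x * c⁻¹, hx c, ?_⟩
        simp [MulAut.conj_apply, mul_assoc]
      have : (hnSeq H φ k).FiniteIndex := ⟨ih⟩
      have : (hnSeq H φ k).normalCore.FiniteIndex := inferInstance
      intro h0
      exact absurd (Nat.eq_zero_of_zero_dvd (h0 ▸ Subgroup.index_dvd_of_le hcore))
        this.index_ne_zero
    have h2 := phiImg_index_ne_zero hle ih φ
    have h3 := phiImg_index_ne_zero hle ih φ.symm
    exact Subgroup.index_inf_ne_zero (Subgroup.index_inf_ne_zero h1 h2) h3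

/-- If `A ≤ B`, both with nonzero index, and `A ≠ B`, then `A.index ≥ 2 * B.index`. -/
lemma index_double {A B : Subgroup F} (hAB : A ≤ B) (hA : A.index ≠ 0) (hne : A ≠ B) :
    2 * B.index ≤ A.index := by
  have h := Subgroup.relIndex_mul_index hAB
  have hrel : A.relIndex B ≠ 0 := by
    intro h0; rw [h0, zero_mul] at h; exact hA h.symm
  have hrel1 : A.relIndex B ≠ 1 := by
    intro h1
    exact hne (le_antisymm hAB (Subgroup.relIndex_eq_one.mp h1))
  have : 2 ≤ A.relIndex B := by omega
  calc 2 * B.index ≤ A.relIndex B * B.index := Nat.mul_le_mul_right _ this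
    _ = A.index := h

end Aux

/-- Let `M` be the maximum φ-stable subgroup of `H` normal in `F` (the join of
all such subgroups). If `M` has finite index `m` in `F`, then the sequence
stabilizes after at most `⌈log₂ m⌉` steps, i.e. `H_{⌈log₂ m⌉} = M`.
Conversely, if the sequence stabilizes then `M` has finite index. -/
theorem hnSeq_stabilization {F : Type*} [Group F] (H : Subgroup F)
    [H.FiniteIndex] (φ : H ≃* H)
    (M : Subgroup F)
    (hM : M = sSup {N : Subgroup F | N ≤ H ∧ N.Normal ∧ phiImg φ.toMonoidHom N ≤ N}) :
    (∀ m : ℕ, m ≠ 0 → M.index = m → hnSeq H φ (Nat.clog 2 m) = M) ∧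
    ((∃ i, hnSeq H φ (i + 1) = hnSeq H φ i) → M.FiniteIndex) := by
  set S := {N : Subgroup F | N ≤ H ∧ N.Normal ∧ phiImg φ.toMonoidHom N ≤ N} with hS
  -- basic properties of M
  have hMH : M ≤ H := by
    rw [hM]; exact sSup_le fun N hN => hN.1
  have hMnormal : M.Normal := by
    have hmap : ∀ g : F, Subgroup.map (MulAut.conj g).toMonoidHom (sSup S) ≤ sSup S := by
      intro g
      rw [Subgroup.map_le_iff_le_comap]
      refine sSup_le fun N hN => le_trans ?_ (Subgroup.comap_mono (le_sSup hN))
      intro x hx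
      exact hN.2.1.conj_mem x hx g
    rw [hM]
    constructor
    intro n hn g
    exact hmap g ⟨n, hn, rfl⟩
  -- M ≤ phiImg φ.symm M
  have hMsymm : M ≤ phiImg φ.symm.toMonoidHom M := by
    rw [hM]
    refine sSup_le fun N hN => ?_
    intro x hx
    rw [mem_phiImg_iff]
    have hxH : x ∈ H := hN.1 hx
    refine ⟨φ ⟨x, hxH⟩, ?_, by simp⟩
    have : ((φ ⟨x, hxH⟩ : H) : F) ∈ phiImg φ.toMonoidHom N :=
      mem_phiImg_iff.mpr ⟨⟨x, hxH⟩, hx, rfl⟩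
    exact le_sSup hN (hN.2.2 this)
  -- phiImg φ M ≤ M
  have hMphi : phiImg φ.toMonoidHom M ≤ M := by
    intro x hx
    rw [mem_phiImg_iff] at hx
    obtain ⟨y, hy, rfl⟩ := hx
    obtain ⟨z, hz, hz2⟩ := mem_phiImg_iff.mp (hMsymm hy)
    have hzy : z = φ y := φ.symm.injective
      (by rw [φ.symm_apply_apply]; exact Subtype.ext hz2)
    exact hzy ▸ hz
  have hMS : M ∈ S := ⟨hMH, hMnormal, hMphi⟩
  -- a stabilized term is in S and between it and M
  have hstab : ∀ i, hnSeq H φ (i + 1) = hnSeq H φ i → hnSeq H φ i ≤ M := by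
    intro i hi
    set A := hnSeq H φ i with hA
    have hAH : A ≤ H := hnSeq_le_H φ i
    have hAconj : A ≤ ⨅ c : F, Subgroup.map (MulAut.conj c⁻¹).toMonoidHom A := by
      conv_lhs => rw [← hi]
      exact le_trans inf_le_left inf_le_left
    have hAsymm : A ≤ phiImg φ.symm.toMonoidHom A := by
      conv_lhs => rw [← hi]
      exact inf_le_right
    have hAnormal : A.Normal := by
      constructor
      intro n hn g
      have := le_iInf_iff.mp hAconj g hn
      obtain ⟨y, hy, hy2⟩ := this
      have hy2' : g⁻¹ * y * g⁻¹⁻¹ = n := hy2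
      have : g * n * g⁻¹ = y := by
        rw [← hy2']; group
      rwa [← this] at hy
    have hAphi : phiImg φ.toMonoidHom A ≤ A := by
      intro x hx
      obtain ⟨y, hy, rfl⟩ := mem_phiImg_iff.mp hx
      obtain ⟨z, hz, hz2⟩ := mem_phiImg_iff.mp (hAsymm hy)
      have hzy : z = φ y := φ.symm.injective
        (by rw [φ.symm_apply_apply]; exact Subtype.ext hz2)
      exact hzy ▸ hz
    rw [hM]
    exact le_sSup ⟨hAH, hAnormal, hAphi⟩
  constructor
  · -- part 1
    intro m hm hMm
    -- φ(M') = M' : from phiImg φ M ≤ M and finite index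
    have hMi : M.index ≠ 0 := hMm ▸ hm
    have hMfix : ∀ x : F, x ∈ M → ∃ y : H, (y : F) ∈ M ∧ ((φ y : H) : F) = x := by
      -- i.e. M ≤ phiImg φ M
      have h1 : phiImg φ.toMonoidHom M ≤ M := hMphi
      have hPi : (phiImg φ.toMonoidHom M).index ≠ 0 := phiImg_index_ne_zero hMH hMi φ
      have hPeq : (phiImg φ.toMonoidHom M).index = M.index := by
        rw [phiImg, Subgroup.index_map_subtype,
          Subgroup.index_map_eq _ φ.surjective
            (le_of_eq_of_le (φ.toMonoidHom.ker_eq_bot_iff.mpr φ.injective) bot_le)]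
        have h := Subgroup.relIndex_mul_index hMH
        rw [Subgroup.relIndex] at h
        exact h
      have : phiImg φ.toMonoidHom M = M := by
        by_contra hne
        have := index_double h1 hPi hne
        omega
      intro x hx
      exact mem_phiImg_iff.mp (show x ∈ phiImg φ.toMonoidHom M by rw [this]; exact hx)
    -- M ≤ hnSeq k for all k
    have hMle : ∀ k, M ≤ hnSeq H φ k := by
      intro k
      induction k with
      | zero => exact hMH
      | succ k ih =>
        refine le_inf (le_inf ?_ ?_) ?_
        · refine le_iInf fun c => ?_
          intro x hx
          exact ⟨c * x * c⁻¹, ih (hMnormal.conj_mem x hx c), by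
            simp [MulAut.conj_apply, mul_assoc]⟩
        · intro x hx
          obtain ⟨y, hy, hy2⟩ := hMfix x hx
          exact mem_phiImg_iff.mpr ⟨y, ih hy, hy2⟩
        · intro x hx
          have hxH : x ∈ H := hMH hx
          refine mem_phiImg_iff.mpr ⟨φ ⟨x, hxH⟩, ?_, by simp⟩
          have : ((φ ⟨x, hxH⟩ : H) : F) ∈ phiImg φ.toMonoidHom M :=
            mem_phiImg_iff.mpr ⟨⟨x, hxH⟩, hx, rfl⟩
          exact ih (hMphi this)
    -- key dichotomy
    have key : ∀ k, hnSeq H φ k = M ∨ 2 ^ k ≤ (hnSeq H φ k).index := by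
      intro k
      induction k with
      | zero =>
        right
        simp only [pow_zero]
        show 1 ≤ H.index
        have := Subgroup.FiniteIndex.index_ne_zero (H := H)
        omega
      | succ k ih =>
        rcases ih with h | h
        · left
          exact le_antisymm (h ▸ hnSeq_succ_le φ k) (h ▸ hMle (k + 1))
        · by_cases he : hnSeq H φ (k + 1) = hnSeq H φ k
          · left
            have h1 : hnSeq H φ k ≤ M := hstab k he
            exact he ▸ le_antisymm h1 (hMle k)
          · right
            have hd := index_double (hnSeq_succ_le φ k) (hnSeq_index_ne_zero φ (k + 1)) he
            calc 2 ^ (k + 1) = 2 * 2 ^ k := by ring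
              _ ≤ 2 * (hnSeq H φ k).index := by omega
              _ ≤ (hnSeq H φ (k + 1)).index := hd
    rcases key (Nat.clog 2 m) with h | h
    · exact h
    · -- index ≥ 2^clog ≥ m, but also divides m, so equals m, forcing equality
      set A := hnSeq H φ (Nat.clog 2 m)
      have hMA : M ≤ A := hMle _
      have hdvd : A.index ∣ m := hMm ▸ Subgroup.index_dvd_of_le hMA
      have hge : m ≤ A.index := le_trans (Nat.le_pow_clog one_lt_two m) h
      have heq : A.index = m := Nat.le_antisymm (Nat.le_of_dvd (Nat.pos_of_ne_zero hm) hdvd) hge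
      -- M ≤ A with equal finite index ⇒ equal
      have hrel := Subgroup.relIndex_mul_index hMA
      rw [hMm, heq] at hrel
      have : M.relIndex A = 1 :=
        Nat.eq_of_mul_eq_mul_right (Nat.pos_of_ne_zero hm) (by rw [hrel, one_mul])
      exact le_antisymm (Subgroup.relIndex_eq_one.mp this) hMA
  · -- part 2
    rintro ⟨i, hi⟩
    have h1 : hnSeq H φ i ≤ M := hstab i hi
    have h2 := hnSeq_index_ne_zero φ i
    refine ⟨fun h0 => ?_⟩
    exact h2 (Nat.eq_zero_of_zero_dvd (h0 ▸ Subgroup.index_dvd_of_le h1))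
end

section
/- (Britton's lemma, one direction as stated) Let G* = G∗_φ t be an HNN extension of G with associated subgroups H₁, H₂ and isomorphism φ : H₁ → H₂. If a word w = w₀ t^{ε₁} w₁ ⋯ t^{ε_k} w_k with k ≥ 1, w_i ∈ G, ε_i = ±1, represents the identity in G*, then w contains a subword t⁻¹ w_i t with w_i ∈ H₁ or a subword t w_i t⁻¹ with w_i ∈ H₂ (i.e., w is not t-reduced). -/
open HNNExtension

/-- Britton's lemma (one direction). In the HNN extension `G∗_φ t` with
associated subgroups `H₁, H₂ ≤ G` and isomorphism `φ : H₁ → H₂` (defining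
relations `t⁻¹ h t = φ(h)` for `h ∈ H₁`, which is `HNNExtension G H₂ H₁ φ.symm`
in Mathlib's convention `t a t⁻¹ = φ(a)`): if a word
`w = w₀ t^{ε₁} w₁ ⋯ t^{ε_k} w_k` with `k ≥ 1` represents the identity, then it
contains a subword `t⁻¹ w_i t` with `w_i ∈ H₁` or a subword `t w_i t⁻¹` with
`w_i ∈ H₂`. -/
theorem britton_lemma {G : Type*} [Group G] (H₁ H₂ : Subgroup G)
    (φ : H₁ ≃* H₂) (k : ℕ) (hk : 1 ≤ k)
    (g : Fin (k + 1) → G) (ε : Fin k → ℤˣ)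
    (hw : (HNNExtension.of (g 0) : HNNExtension G H₂ H₁ φ.symm) *
        (List.ofFn fun i : Fin k =>
          (HNNExtension.t : HNNExtension G H₂ H₁ φ.symm) ^ ((ε i : ℤ)) *
            HNNExtension.of (g i.succ)).prod = 1) :
    ∃ i j : Fin k, (j : ℕ) = (i : ℕ) + 1 ∧
      ((ε i = -1 ∧ ε j = 1 ∧ g i.succ ∈ H₁) ∨
       (ε i = 1 ∧ ε j = -1 ∧ g i.succ ∈ H₂)) := by
  by_contra hcon
  push_neg at hcon
  have chain : (List.ofFn fun i : Fin k => ((ε i, g i.succ) : ℤˣ × G)).Chain'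
      (fun a b => a.2 ∈ toSubgroup H₂ H₁ a.1 → a.1 = b.1) := by
    show List.IsChain _ _
    rw [List.isChain_ofFn]
    intro i hi
    intro hmem
    by_contra hne
    have hji : ((⟨i + 1, hi⟩ : Fin k) : ℕ) = ((⟨i, Nat.lt_of_succ_lt hi⟩ : Fin k) : ℕ) + 1 := rfl
    have := hcon ⟨i, Nat.lt_of_succ_lt hi⟩ ⟨i + 1, hi⟩ hji
    rcases Int.units_eq_one_or (ε ⟨i, Nat.lt_of_succ_lt hi⟩) with h1 | h1 <;>
      rcases Int.units_eq_one_or (ε ⟨i + 1, hi⟩) with h2 | h2 <;>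
      simp_all [toSubgroup]
  let w : HNNExtension.NormalWord.ReducedWord G H₂ H₁ :=
    { head := g 0
      toList := List.ofFn fun i : Fin k => ((ε i, g i.succ) : ℤˣ × G)
      chain := chain }
  have hprod : w.prod φ.symm = 1 := by
    rw [HNNExtension.NormalWord.ReducedWord.prod]
    show HNNExtension.of (g 0) * _ = 1
    rw [List.map_ofFn]
    exact hw
  have := HNNExtension.ReducedWord.toList_eq_nil_of_mem_of_range φ.symm w (by
    rw [hprod]; exact ⟨1, by simp⟩)
  have h0 : (List.ofFn fun i : Fin k => ((ε i, g i.succ) : ℤˣ × G)) = [] := this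
  have := congrArg List.length h0
  simp at this
  omega
end
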